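/- Let H_A ⊗ H_B be a finite-dimensional bipartite Hilbert space, ω a positive definite density matrix with reduced state ρ = Tr_B ω, and let Φ be the partial trace map Tr_B. Then for any Hermitian operator O on H_A ⊗ H_B, the Bures norm is contractive: ‖Tr_B O‖_ρ ≤ ‖O‖_ω, where the Bures norms are defined via the eigendecompositions of ρ and ω respectively as ‖X‖_σ² = ∑_{i,j} 2|⟨i|X|j⟩|²/(q_i+q_j). -/

import Mathlib

/-!
The squared Bures norm is a maximum:
`‖O‖²_ω = max_Z (2 Re Tr(O Z) - ½ Re Tr(ω (Z Zᴴ + Zᴴ Z)))`. In the eigenbasis of `ω` the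
functional splits into the scalar quadratics `2 Re(x z) - c/2 |z|²`, `c = q_k + q_l`, each at
most `2 |x|² / c`, with equality at `z = 2 x̄ / c`.
Since `Tr(O (Z ⊗ 1)) = Tr(Tr_B O · Z)` and `Tr(ω (Y ⊗ 1)) = Tr(ρ Y)`, the value of the
functional of `(ρ, Tr_B O)` at `Z` equals that of `(ω, O)` at `Z ⊗ 1`; so the maximum for
`(ρ, Tr_B O)` is attained inside the competitors for `(ω, O)`.
-/

open Finset
open scoped ComplexOrder

/-- Partial trace over the second (B) factor. -/
noncomputable def ptraceB {a b : ℕ} (ω : Matrix (Fin a × Fin b) (Fin a × Fin b) ℂ) :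
    Matrix (Fin a) (Fin a) ℂ :=
  Matrix.of fun i j => ∑ k : Fin b, ω (i, k) (j, k)

/-- Matrix element ⟨i|O|j⟩ in the basis `v`. -/
noncomputable def matElem {ι : Type*} [Fintype ι] (v : ι → (ι → ℂ))
    (O : Matrix ι ι ℂ) (i j : ι) : ℂ :=
  dotProduct (star (v i)) (O.mulVec (v j))

/-- Bures norm squared of `O` with respect to the spectral data `(p, v)`. -/
noncomputable def buresSq {ι : Type*} [Fintype ι] (p : ι → ℝ) (v : ι → (ι → ℂ))
    (O : Matrix ι ι ℂ) : ℝ :=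
  ∑ i, ∑ j, 2 * ‖matElem v O i j‖ ^ 2 / (p i + p j)

open Matrix
open scoped Kronecker

noncomputable def buresFunctional {ι : Type*} [Fintype ι] (ω O Z : Matrix ι ι ℂ) : ℝ :=
  2 * (O * Z).trace.re - (ω * (Z * Zᴴ + Zᴴ * Z)).trace.re / 2

lemma two_mul_re_mul_sub_le {c : ℝ} (hc : 0 < c) (x z : ℂ) :
    2 * (x * z).re - c / 2 * ‖z‖ ^ 2 ≤ 2 * ‖x‖ ^ 2 / c := by
  rw [Complex.sq_norm, Complex.sq_norm, Complex.mul_re, Complex.normSq_apply,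
    Complex.normSq_apply, le_div_iff₀ hc]
  nlinarith [sq_nonneg (c * z.re - 2 * x.re), sq_nonneg (c * z.im + 2 * x.im)]

-- No sign condition on `c`: at `c = 0` both sides vanish because `2 / 0 = 0`.
lemma two_mul_re_mul_sub_eq (c : ℝ) (x : ℂ) :
    2 * (x * (((2 / c : ℝ) : ℂ) * star x)).re - c / 2 * ‖((2 / c : ℝ) : ℂ) * star x‖ ^ 2
      = 2 * ‖x‖ ^ 2 / c := by
  rcases eq_or_ne c 0 with rfl | hc
  · simp
  rw [mul_left_comm, Complex.star_def, Complex.mul_conj, ← Complex.ofReal_mul,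
    Complex.ofReal_re, norm_mul, Complex.norm_conj, Complex.norm_real, Real.norm_eq_abs,
    mul_pow, sq_abs, Complex.normSq_eq_norm_sq]
  field_simp
  ring

section

variable {ι : Type*} [Fintype ι] [DecidableEq ι]

lemma transpose_of_mem_unitary_of_orthonormal {v : ι → ι → ℂ}
    (horth : ∀ i j, star (v i) ⬝ᵥ v j = if i = j then 1 else 0) :
    (of v)ᵀ ∈ unitary (Matrix ι ι ℂ) := by
  rw [← Matrix.unitaryGroup, mem_unitaryGroup_iff']
  ext i j
  simpa [mul_apply, one_apply, dotProduct] using horth i j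

omit [DecidableEq ι] in
lemma matElem_eq_star_mul_mul (v : ι → ι → ℂ) (O : Matrix ι ι ℂ) (i j : ι) :
    matElem v O i j = (star (of v)ᵀ * O * (of v)ᵀ) i j := by
  simp only [matElem, dotProduct, mulVec, mul_apply, star_eq_conjTranspose, conjTranspose_apply,
    transpose_apply, of_apply, Pi.star_apply, Finset.mul_sum, Finset.sum_mul]
  rw [Finset.sum_comm]
  exact Finset.sum_congr rfl fun _ _ => Finset.sum_congr rfl fun _ _ => by ring

lemma star_mul_mul_eq_diagonal {ω : Matrix ι ι ℂ} {p : ι → ℝ} {v : ι → ι → ℂ}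
    (horth : ∀ i j, star (v i) ⬝ᵥ v j = if i = j then 1 else 0)
    (heig : ∀ i, ω *ᵥ v i = (p i : ℂ) • v i) :
    star (of v)ᵀ * ω * (of v)ᵀ = diagonal fun i => (p i : ℂ) := by
  have hcols : ω * (of v)ᵀ = (of v)ᵀ * diagonal fun i => (p i : ℂ) := by
    ext x j
    simpa [mul_apply, mulVec, dotProduct, diagonal_apply, mul_comm] using congrFun (heig j) x
  rw [Matrix.mul_assoc, hcols, ← Matrix.mul_assoc,
    Unitary.star_mul_self_of_mem (transpose_of_mem_unitary_of_orthonormal horth), Matrix.one_mul]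


lemma buresFunctional_star_mul_mul {U : Matrix ι ι ℂ} (hU : U ∈ unitary (Matrix ι ι ℂ))
    (ω O Z : Matrix ι ι ℂ) :
    buresFunctional (star U * ω * U) (star U * O * U) (star U * Z * U)
      = buresFunctional ω O Z := by
  let f := Unitary.conjStarAlgAut ℂ (Matrix ι ι ℂ) (star ⟨U, hU⟩)
  have hf : ∀ X, f X = star U * X * U := fun X => by simp [f]
  have htrace : ∀ X, (f X).trace = X.trace := fun X => by
    rw [hf, trace_mul_cycle, Unitary.mul_star_self_of_mem hU, Matrix.one_mul]
  simp only [buresFunctional, ← hf, ← star_eq_conjTranspose, ← map_star, ← map_mul, ← map_add,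
    htrace]

lemma buresFunctional_diagonal (q : ι → ℝ) (O Z : Matrix ι ι ℂ) :
    buresFunctional (diagonal fun i => (q i : ℂ)) O Z
      = ∑ k, ∑ l, (2 * (O k l * Z l k).re - (q k + q l) / 2 * ‖Z l k‖ ^ 2) := by
  have hquad : ∀ k, ((Z * Zᴴ + Zᴴ * Z) k k).re = ∑ l, (‖Z k l‖ ^ 2 + ‖Z l k‖ ^ 2) := fun k => by
    simp only [Matrix.add_apply, mul_apply, conjTranspose_apply, Complex.add_re, Complex.re_sum,
      Finset.sum_add_distrib, Complex.star_def, Complex.mul_conj', Complex.conj_mul']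
    norm_cast
  have hweight : ∑ k, q k * ∑ l, (‖Z k l‖ ^ 2 + ‖Z l k‖ ^ 2)
      = ∑ k, ∑ l, (q k + q l) * ‖Z l k‖ ^ 2 := by
    simp only [mul_add, add_mul, Finset.mul_sum, Finset.sum_add_distrib]
    rw [Finset.sum_comm (f := fun k l => q k * ‖Z k l‖ ^ 2), add_comm]
  have htrace : (O * Z).trace.re = ∑ k, ∑ l, (O k l * Z l k).re := by
    simp only [trace, Matrix.diag, mul_apply, Complex.re_sum]
  have htrace_diagonal : ∀ M : Matrix ι ι ℂ,
      ((diagonal fun i => (q i : ℂ)) * M).trace.re = ∑ k, q k * (M k k).re := fun M => by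
    simp only [trace, Matrix.diag, diagonal_mul, Complex.re_sum, Complex.re_ofReal_mul]
  rw [buresFunctional, htrace, htrace_diagonal]
  simp only [hquad]
  rw [hweight]
  simp only [Finset.mul_sum, Finset.sum_div, ← Finset.sum_sub_distrib]
  refine Finset.sum_congr rfl fun k _ => Finset.sum_congr rfl fun l _ => by ring

theorem buresFunctional_le_buresSq {ω : Matrix ι ι ℂ} {q : ι → ℝ} {w : ι → ι → ℂ}
    (hq : ∀ i, 0 < q i) (horth : ∀ i j, star (w i) ⬝ᵥ w j = if i = j then 1 else 0)
    (heig : ∀ i, ω *ᵥ w i = (q i : ℂ) • w i) (O Z : Matrix ι ι ℂ) :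
    buresFunctional ω O Z ≤ buresSq q w O := by
  rw [← buresFunctional_star_mul_mul (transpose_of_mem_unitary_of_orthonormal horth),
    star_mul_mul_eq_diagonal horth heig, buresFunctional_diagonal, buresSq]
  simp only [matElem_eq_star_mul_mul]
  gcongr with k _ l _
  exact two_mul_re_mul_sub_le (add_pos (hq k) (hq l)) _ _

theorem exists_buresFunctional_eq_buresSq {ρ : Matrix ι ι ℂ} {p : ι → ℝ} {v : ι → ι → ℂ}
    (horth : ∀ i j, star (v i) ⬝ᵥ v j = if i = j then 1 else 0)
    (heig : ∀ i, ρ *ᵥ v i = (p i : ℂ) • v i) (X : Matrix ι ι ℂ) :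
    ∃ Z, buresFunctional ρ X Z = buresSq p v X := by
  set U := (of v)ᵀ
  have hU : U ∈ unitary (Matrix ι ι ℂ) := transpose_of_mem_unitary_of_orthonormal horth
  set X' := star U * X * U
  set Z' := of fun i j => ((2 / (p i + p j) : ℝ) : ℂ) * star (X' j i)
  have hZ' : star U * (U * Z' * star U) * U = Z' := by
    simp only [← Matrix.mul_assoc, Unitary.star_mul_self_of_mem hU, Matrix.one_mul]
    rw [Matrix.mul_assoc, Unitary.star_mul_self_of_mem hU, Matrix.mul_one]
  refine ⟨U * Z' * star U, ?_⟩
  rw [← buresFunctional_star_mul_mul hU, star_mul_mul_eq_diagonal horth heig, hZ',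
    buresFunctional_diagonal, buresSq]
  simp only [matElem_eq_star_mul_mul]
  refine Finset.sum_congr rfl fun k _ => Finset.sum_congr rfl fun l _ => ?_
  rw [show Z' l k = ((2 / (p k + p l) : ℝ) : ℂ) * star (X' k l) by
    simp only [Z', of_apply, add_comm]]
  exact two_mul_re_mul_sub_eq _ _

end

lemma trace_mul_kronecker_one {a b : ℕ} (M : Matrix (Fin a × Fin b) (Fin a × Fin b) ℂ)
    (A : Matrix (Fin a) (Fin a) ℂ) :
    (M * (A ⊗ₖ (1 : Matrix (Fin b) (Fin b) ℂ))).trace = (ptraceB M * A).trace := by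
  simp only [trace, Matrix.diag, mul_apply, ptraceB, kroneckerMap_apply, of_apply, one_apply,
    mul_ite, mul_one, mul_zero, Fintype.sum_prod_type, Finset.sum_ite_eq', Finset.mem_univ,
    if_true, Finset.sum_mul]
  exact Finset.sum_congr rfl fun _ _ => Finset.sum_comm

lemma buresFunctional_kronecker_one {a b : ℕ} (ω O : Matrix (Fin a × Fin b) (Fin a × Fin b) ℂ)
    (Z : Matrix (Fin a) (Fin a) ℂ) :
    buresFunctional ω O (Z ⊗ₖ (1 : Matrix (Fin b) (Fin b) ℂ))
      = buresFunctional (ptraceB ω) (ptraceB O) Z := by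
  simp only [buresFunctional, conjTranspose_kronecker, conjTranspose_one, ← mul_kronecker_mul,
    Matrix.mul_one, ← add_kronecker, trace_mul_kronecker_one]

theorem bures_contractive_partial_trace_general {a b : ℕ}
    (ω O : Matrix (Fin a × Fin b) (Fin a × Fin b) ℂ)
    (ρ : Matrix (Fin a) (Fin a) ℂ)
    (q : Fin a × Fin b → ℝ) (w : Fin a × Fin b → (Fin a × Fin b → ℂ))
    (p : Fin a → ℝ) (v : Fin a → (Fin a → ℂ))
    (hρ : ρ = ptraceB ω)
    (hq : ∀ i, 0 < q i)
    (horthw : ∀ i j, dotProduct (star (w i)) (w j) = if i = j then 1 else 0)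
    (heigw : ∀ i, ω.mulVec (w i) = (q i : ℂ) • w i)
    (horthv : ∀ i j, dotProduct (star (v i)) (v j) = if i = j then 1 else 0)
    (heigv : ∀ i, ρ.mulVec (v i) = (p i : ℂ) • v i) :
    Real.sqrt (buresSq p v (ptraceB O)) ≤ Real.sqrt (buresSq q w O) := by
  obtain ⟨Z, hZ⟩ := exists_buresFunctional_eq_buresSq horthv heigv (ptraceB O)
  refine Real.sqrt_le_sqrt ?_
  calc buresSq p v (ptraceB O) = buresFunctional ρ (ptraceB O) Z := hZ.symm
    _ = buresFunctional ω O (Z ⊗ₖ 1) := by rw [hρ, buresFunctional_kronecker_one]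
    _ ≤ buresSq q w O := buresFunctional_le_buresSq hq horthw heigw O _

/-- Monotonicity of the Bures norm under the partial trace: for a faithful state
    ω on H_A ⊗ H_B with reduced state ρ = Tr_B ω, and any Hermitian O,
    ‖Tr_B O‖_ρ ≤ ‖O‖_ω, the Bures norms being computed from the spectral data
    (q, w) of ω and (p, v) of ρ. -/
theorem bures_contractive_partial_trace {a b : ℕ}
    (ω O : Matrix (Fin a × Fin b) (Fin a × Fin b) ℂ)
    (ρ : Matrix (Fin a) (Fin a) ℂ)
    (q : Fin a × Fin b → ℝ) (w : Fin a × Fin b → (Fin a × Fin b → ℂ))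
    (p : Fin a → ℝ) (v : Fin a → (Fin a → ℂ))
    (hω : ω.PosDef) (htrω : ω.trace = 1) (hρ : ρ = ptraceB ω)
    (hq : ∀ i, 0 < q i) (hp : ∀ i, 0 < p i)
    (horthw : ∀ i j, dotProduct (star (w i)) (w j) = if i = j then 1 else 0)
    (heigw : ∀ i, ω.mulVec (w i) = (q i : ℂ) • w i)
    (horthv : ∀ i j, dotProduct (star (v i)) (v j) = if i = j then 1 else 0)
    (heigv : ∀ i, ρ.mulVec (v i) = (p i : ℂ) • v i)
    (hO : O.IsHermitian) :
    Real.sqrt (buresSq p v (ptraceB O)) ≤ Real.sqrt (buresSq q w O) :=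
  bures_contractive_partial_trace_general ω O ρ q w p v hρ hq horthw heigw horthv heigv
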